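/- arXiv:2209.05035 — 3 statements merged into one kernel-verified Lean document; each statement's English description precedes it below -/
import Mathlib

section
/- Suppose N ≠ ∅ and C ∪ L ≠ ∅. Define x* by x*_j = (β_j / ∑_{m∈L∪C} β_m) · R for all j ∈ C, and x*_{ij} = (β_j / ∑_{m∈L∪C} β_m) · R · exp(α_i / (1 + ∑_{k∈L} β_k)) / (∑_{m∈N} exp(α_m / (1 + ∑_{k∈L} β_k))) for all i ∈ N and all j ∈ L. Then x* is a feasible budget allocation and for every feasible budget allocation x one has P(x*) ≤ P(x); that is, x* is a (global) optimal budget allocation of the problem min_{x∈𝒳} P(x). -/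
open Real Finset

/-- The function `B(x) = ∑_{i∈N} exp(α_i) / (∏_{j∈L} x_{ij}^{β_j} · ∏_{j∈C} x_j^{β_j})`. -/
noncomputable def Bfun {N L C : Type*} [Fintype N] [Fintype L] [Fintype C]
    (α : N → ℝ) (β : L ⊕ C → ℝ) (x : (N → L → ℝ) × (C → ℝ)) : ℝ :=
  ∑ i : N, Real.exp (α i) /
    ((∏ j : L, x.1 i j ^ β (Sum.inl j)) * ∏ j : C, x.2 j ^ β (Sum.inr j))

/-- The overall pickpocket probability `P(x) = B(x) / (1 + B(x))`. -/
noncomputable def Pfun {N L C : Type*} [Fintype N] [Fintype L] [Fintype C]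
    (α : N → ℝ) (β : L ⊕ C → ℝ) (x : (N → L → ℝ) × (C → ℝ)) : ℝ :=
  Bfun α β x / (1 + Bfun α β x)

/-- A budget allocation has all entries strictly positive. -/
def PosAlloc {N L C : Type*} (x : (N → L → ℝ) × (C → ℝ)) : Prop :=
  (∀ i j, 0 < x.1 i j) ∧ ∀ j, 0 < x.2 j

/-- A budget allocation is feasible: positive entries, total spend at most `R`. -/
def FeasAlloc {N L C : Type*} [Fintype N] [Fintype L] [Fintype C]
    (R : ℝ) (x : (N → L → ℝ) × (C → ℝ)) : Prop :=
  PosAlloc x ∧ (∑ i : N, ∑ j : L, x.1 i j) + ∑ j : C, x.2 j ≤ R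

/-- The candidate optimal budget allocation `x*`. -/
noncomputable def xstar {N L C : Type*} [Fintype N] [Fintype L] [Fintype C]
    (R : ℝ) (α : N → ℝ) (β : L ⊕ C → ℝ) : (N → L → ℝ) × (C → ℝ) :=
  (fun i j => β (Sum.inl j) / (∑ m : L ⊕ C, β m) * R *
      (Real.exp (α i / (1 + ∑ k : L, β (Sum.inl k))) /
        ∑ m : N, Real.exp (α m / (1 + ∑ k : L, β (Sum.inl k)))),
   fun j => β (Sum.inr j) / (∑ m : L ⊕ C, β m) * R)

/-!
Write `B(x) = ∑ i, exp (u i x)` with `u i x = α i - ∑_{j ∈ L} β j log x_ij - ∑_{j ∈ C} β j log x_j`.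
For probability weights `w`, convexity of `exp` gives `B(x) ≥ exp (∑ i, w i (u i x - log w i))`,
with equality when `u i x - log w i` does not depend on `i`. Take `w` to be the softmax of
`α / τ`, `τ = 1 + ∑_{j ∈ L} β j`. Then `∑ i, w i u i x` is, up to a constant, minus the weighted
log-utility `∑ γ_k log y_k` of `x` flattened to a vector `y` on `(N × L) ⊕ C`, with weights
`γ = (w i β j, β j)`; under the budget constraint concavity of `log` makes this largest when
`y ∝ γ`, which is `x*`. At `x*` the equality condition holds as well, so `B(x*) ≤ B(x)`,
and `P = B / (1 + B)` is increasing in `B`.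
-/

theorem prod_rpow_eq_exp_sum {ι : Type*} (s : Finset ι) {y : ι → ℝ} (hy : ∀ k ∈ s, 0 < y k)
    (b : ι → ℝ) : ∏ k ∈ s, y k ^ b k = exp (∑ k ∈ s, b k * log (y k)) := by
  rw [Real.exp_sum]
  exact prod_congr rfl fun k hk => by rw [rpow_def_of_pos (hy k hk), mul_comm]

theorem exp_sum_mul_sub_log_le_sum_exp {ι : Type*} (s : Finset ι) {w : ι → ℝ}
    (hw : ∀ i ∈ s, 0 < w i) (hw₁ : ∑ i ∈ s, w i = 1) (u : ι → ℝ) :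
    exp (∑ i ∈ s, w i * (u i - log (w i))) ≤ ∑ i ∈ s, exp (u i) := by
  have h := convexOn_exp.map_sum_le (fun i hi => (hw i hi).le) hw₁
    (p := fun i => u i - log (w i)) (fun _ _ => Set.mem_univ _)
  refine h.trans_eq (sum_congr rfl fun i hi => ?_)
  rw [smul_eq_mul, exp_sub, exp_log (hw i hi), mul_div_cancel₀ _ (hw i hi).ne']

theorem sum_exp_eq_exp_sum_mul_sub_log {ι : Type*} (s : Finset ι) {w : ι → ℝ}
    (hw : ∀ i ∈ s, 0 < w i) (hw₁ : ∑ i ∈ s, w i = 1) {u : ι → ℝ} {c : ℝ}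
    (hc : ∀ i ∈ s, u i - log (w i) = c) :
    ∑ i ∈ s, exp (u i) = exp (∑ i ∈ s, w i * (u i - log (w i))) := by
  have hu : ∀ i ∈ s, exp (u i) = exp c * w i := fun i hi => by
    rw [← hc i hi, exp_sub, exp_log (hw i hi), div_mul_cancel₀ _ (hw i hi).ne']
  rw [sum_congr rfl hu, ← mul_sum, hw₁, sum_congr rfl fun i hi => by rw [hc i hi],
    ← sum_mul, hw₁, one_mul, mul_one]

theorem sum_mul_log_le_of_proportional {ι : Type*} (s : Finset ι) {γ y y' : ι → ℝ} {t : ℝ}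
    (ht : 0 < t) (hγ : ∀ k ∈ s, 0 < γ k) (hy : ∀ k ∈ s, 0 < y k)
    (hy' : ∀ k ∈ s, y' k = t * γ k) (hsum : ∑ k ∈ s, y k ≤ ∑ k ∈ s, y' k) :
    ∑ k ∈ s, γ k * log (y k) ≤ ∑ k ∈ s, γ k * log (y' k) := by
  have key : ∀ k ∈ s, γ k * log (y k) - γ k * log (y' k) ≤ (y k - y' k) / t := by
    intro k hk
    have hy'k : 0 < y' k := hy' k hk ▸ mul_pos ht (hγ k hk)
    calc γ k * log (y k) - γ k * log (y' k) = γ k * log (y k / y' k) := by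
          rw [log_div (hy k hk).ne' hy'k.ne', mul_sub]
      _ ≤ γ k * (y k / y' k - 1) :=
          mul_le_mul_of_nonneg_left (log_le_sub_one_of_pos (div_pos (hy k hk) hy'k))
            (hγ k hk).le
      _ = (y k - y' k) / t := by
          rw [hy' k hk]; field_simp [(hγ k hk).ne', ht.ne']
  have h := sum_le_sum key
  rw [sum_sub_distrib, ← sum_div, sum_sub_distrib] at h
  have hnp : (∑ k ∈ s, y k - ∑ k ∈ s, y' k) / t ≤ 0 :=
    div_nonpos_of_nonpos_of_nonneg (by linarith) ht.le
  linarith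

section Allocation

variable {N L C : Type*} [Fintype N] [Fintype L] [Fintype C]

theorem Pfun_le_Pfun_of_Bfun_le {α : N → ℝ} {β : L ⊕ C → ℝ} {x y : (N → L → ℝ) × (C → ℝ)}
    (hx : 0 ≤ Bfun α β x) (hxy : Bfun α β x ≤ Bfun α β y) : Pfun α β x ≤ Pfun α β y := by
  unfold Pfun
  rw [div_le_div_iff₀ (by linarith) (by linarith)]
  linarith

variable (α : N → ℝ) (β : L ⊕ C → ℝ)

noncomputable def logTerm (x : (N → L → ℝ) × (C → ℝ)) (i : N) : ℝ :=
  α i - (∑ j : L, β (Sum.inl j) * log (x.1 i j) + ∑ j : C, β (Sum.inr j) * log (x.2 j))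

theorem Bfun_eq_sum_exp_logTerm {x : (N → L → ℝ) × (C → ℝ)} (hx : PosAlloc x) :
    Bfun α β x = ∑ i, exp (logTerm α β x i) := by
  refine sum_congr rfl fun i _ => ?_
  rw [prod_rpow_eq_exp_sum _ (fun j _ => hx.1 i j), prod_rpow_eq_exp_sum _ (fun j _ => hx.2 j),
    ← exp_add, ← exp_sub, logTerm]

def allocVec (x : (N → L → ℝ) × (C → ℝ)) : (N × L) ⊕ C → ℝ :=
  Sum.elim (fun p => x.1 p.1 p.2) x.2

omit [Fintype N] [Fintype L] [Fintype C] in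
theorem posAlloc_iff_allocVec_pos {x : (N → L → ℝ) × (C → ℝ)} :
    PosAlloc x ↔ ∀ k, 0 < allocVec x k :=
  ⟨fun hx k => k.rec (fun p => hx.1 p.1 p.2) hx.2,
    fun hx => ⟨fun i j => hx (Sum.inl (i, j)), fun j => hx (Sum.inr j)⟩⟩

theorem sum_allocVec (x : (N → L → ℝ) × (C → ℝ)) :
    ∑ k, allocVec x k = (∑ i : N, ∑ j : L, x.1 i j) + ∑ j : C, x.2 j := by
  rw [Fintype.sum_sum_type, Fintype.sum_prod_type]
  rfl

def allocWeight (w : N → ℝ) : (N × L) ⊕ C → ℝ :=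
  Sum.elim (fun p => w p.1 * β (Sum.inl p.2)) (fun j => β (Sum.inr j))

omit [Fintype N] [Fintype L] [Fintype C] in
theorem allocWeight_pos {w : N → ℝ} (hw : ∀ i, 0 < w i) (hβ : ∀ j, 0 < β j) (k : (N × L) ⊕ C) :
    0 < allocWeight β w k := by
  rcases k with ⟨i, j⟩ | j
  exacts [mul_pos (hw i) (hβ _), hβ _]

theorem sum_allocWeight {w : N → ℝ} (hw₁ : ∑ i, w i = 1) :
    ∑ k, allocWeight β w k = ∑ j, β j := by
  simp only [allocWeight, Fintype.sum_sum_type, Fintype.sum_prod_type, Sum.elim_inl,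
    Sum.elim_inr, ← mul_sum, ← sum_mul, hw₁, one_mul]

theorem sum_mul_logTerm {w : N → ℝ} (hw₁ : ∑ i, w i = 1) (x : (N → L → ℝ) × (C → ℝ)) :
    ∑ i, w i * logTerm α β x i =
      ∑ i, w i * α i - ∑ k, allocWeight β w k * log (allocVec x k) := by
  simp only [logTerm, allocWeight, allocVec, Fintype.sum_sum_type, Fintype.sum_prod_type,
    Sum.elim_inl, Sum.elim_inr, mul_sub, mul_add, sum_sub_distrib, sum_add_distrib, ← sum_mul,
    hw₁, one_mul]
  simp only [mul_sum, mul_assoc]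

noncomputable def softmaxTemp : ℝ := 1 + ∑ k : L, β (Sum.inl k)

omit [Fintype C] in
theorem softmaxTemp_pos (hβ : ∀ j, 0 < β j) : 0 < softmaxTemp β :=
  add_pos_of_pos_of_nonneg one_pos (sum_nonneg fun _ _ => (hβ _).le)

noncomputable def softmaxWeight (i : N) : ℝ :=
  exp (α i / softmaxTemp β) / ∑ m, exp (α m / softmaxTemp β)

noncomputable def budgetShare (R : ℝ) (j : L ⊕ C) : ℝ := β j / (∑ m, β m) * R

theorem allocVec_xstar (R : ℝ) :
    allocVec (xstar R α β) = fun k => R / (∑ m, β m) * allocWeight β (softmaxWeight α β) k := by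
  funext k
  rcases k with ⟨i, j⟩ | j
  · change β (Sum.inl j) / _ * R * softmaxWeight α β i = _
    simp only [allocWeight, Sum.elim_inl]
    ring
  · change β (Sum.inr j) / _ * R = _
    simp only [allocWeight, Sum.elim_inr]
    ring

variable [Nonempty N]

omit [Fintype C] in
theorem softmaxWeight_pos (i : N) : 0 < softmaxWeight α β i :=
  div_pos (exp_pos _) (sum_pos (fun _ _ => exp_pos _) univ_nonempty)

omit [Fintype C] in
theorem sum_softmaxWeight : ∑ i, softmaxWeight α β i = 1 := by
  simp only [softmaxWeight, ← sum_div]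
  exact div_self (sum_pos (fun _ _ => exp_pos _) univ_nonempty).ne'

omit [Fintype C] in
theorem log_softmaxWeight (i : N) :
    log (softmaxWeight α β i) = α i / softmaxTemp β - log (∑ m, exp (α m / softmaxTemp β)) := by
  rw [softmaxWeight, log_div (exp_pos _).ne' (sum_pos (fun _ _ => exp_pos _) univ_nonempty).ne',
    log_exp]

variable [Nonempty (L ⊕ C)] {R : ℝ}

theorem sum_allocVec_xstar (hβ : ∀ j, 0 < β j) : ∑ k, allocVec (xstar R α β) k = R := by
  rw [allocVec_xstar, ← mul_sum, sum_allocWeight β (sum_softmaxWeight α β),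
    div_mul_cancel₀ _ (sum_pos (fun j _ => hβ j) univ_nonempty).ne']

theorem feasAlloc_xstar (hR : 0 < R) (hβ : ∀ j, 0 < β j) : FeasAlloc R (xstar R α β) := by
  refine ⟨posAlloc_iff_allocVec_pos.2 fun k => ?_, ?_⟩
  · rw [allocVec_xstar]
    have := allocWeight_pos β (softmaxWeight_pos α β) hβ k
    have := sum_pos (fun j _ => hβ j) (univ_nonempty (α := L ⊕ C))
    positivity
  · rw [← sum_allocVec, sum_allocVec_xstar α β hβ]

theorem logTerm_xstar_sub_log_softmaxWeight (hR : 0 < R) (hβ : ∀ j, 0 < β j) (i : N) :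
    logTerm α β (xstar R α β) i - log (softmaxWeight α β i) =
      softmaxTemp β * log (∑ m, exp (α m / softmaxTemp β)) -
        ∑ j, β j * log (budgetShare β R j) := by
  have hshare : ∀ j, 0 < budgetShare β R j := fun j =>
    mul_pos (div_pos (hβ j) (sum_pos (fun j _ => hβ j) univ_nonempty)) hR
  have hxL : ∀ j, log ((xstar R α β).1 i j) =
      log (budgetShare β R (Sum.inl j)) + log (softmaxWeight α β i) :=
    fun j => log_mul (hshare _).ne' (softmaxWeight_pos α β i).ne'
  have hxC : ∀ j, (xstar R α β).2 j = budgetShare β R (Sum.inr j) := fun j => rfl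
  have hτ : softmaxTemp β * log (softmaxWeight α β i) =
      α i - softmaxTemp β * log (∑ m, exp (α m / softmaxTemp β)) := by
    rw [log_softmaxWeight]
    field_simp [(softmaxTemp_pos β hβ).ne']
  rw [logTerm, Fintype.sum_sum_type]
  simp only [hxL, hxC, mul_add, sum_add_distrib, ← sum_mul]
  unfold softmaxTemp at hτ ⊢
  linarith

theorem sum_mul_logTerm_xstar_le (hR : 0 < R) (hβ : ∀ j, 0 < β j) {x : (N → L → ℝ) × (C → ℝ)}
    (hx : FeasAlloc R x) :
    ∑ i, softmaxWeight α β i * logTerm α β (xstar R α β) i ≤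
      ∑ i, softmaxWeight α β i * logTerm α β x i := by
  have hw₁ := sum_softmaxWeight α β
  rw [sum_mul_logTerm α β hw₁, sum_mul_logTerm α β hw₁, sub_le_sub_iff_left]
  refine sum_mul_log_le_of_proportional univ (t := R / ∑ m, β m) ?_
    (fun k _ => allocWeight_pos β (softmaxWeight_pos α β) hβ k)
    (fun k _ => posAlloc_iff_allocVec_pos.1 hx.1 k) (fun k _ => by rw [allocVec_xstar]) ?_
  · exact div_pos hR (sum_pos (fun j _ => hβ j) univ_nonempty)
  · rw [sum_allocVec_xstar α β hβ, sum_allocVec]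
    exact hx.2

theorem Bfun_xstar_le (hR : 0 < R) (hβ : ∀ j, 0 < β j) {x : (N → L → ℝ) × (C → ℝ)}
    (hx : FeasAlloc R x) : Bfun α β (xstar R α β) ≤ Bfun α β x := by
  have hw := fun i (_ : i ∈ univ) => softmaxWeight_pos α β i
  have hw₁ := sum_softmaxWeight α β
  calc Bfun α β (xstar R α β) = ∑ i, exp (logTerm α β (xstar R α β) i) :=
        Bfun_eq_sum_exp_logTerm α β (feasAlloc_xstar α β hR hβ).1
    _ = exp (∑ i, softmaxWeight α β i *
          (logTerm α β (xstar R α β) i - log (softmaxWeight α β i))) :=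
        sum_exp_eq_exp_sum_mul_sub_log univ hw hw₁
          fun i _ => logTerm_xstar_sub_log_softmaxWeight α β hR hβ i
    _ ≤ exp (∑ i, softmaxWeight α β i * (logTerm α β x i - log (softmaxWeight α β i))) := by
        simp only [exp_le_exp, mul_sub, sum_sub_distrib, sub_le_sub_iff_right]
        exact sum_mul_logTerm_xstar_le α β hR hβ hx
    _ ≤ ∑ i, exp (logTerm α β x i) := exp_sum_mul_sub_log_le_sum_exp univ hw hw₁ _
    _ = Bfun α β x := (Bfun_eq_sum_exp_logTerm α β hx.1).symm

end Allocation

theorem stmt_10_general {N L C : Type*} [Fintype N] [Fintype L] [Fintype C]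
    [Nonempty N] [Nonempty (L ⊕ C)]
    (R : ℝ) (hR : 0 < R) (α : N → ℝ)
    (β : L ⊕ C → ℝ) (hβ : ∀ j, 0 < β j) :
    FeasAlloc R (xstar R α β) ∧
    ∀ x : (N → L → ℝ) × (C → ℝ), FeasAlloc R x →
      Pfun α β (xstar R α β) ≤ Pfun α β x := by
  refine ⟨feasAlloc_xstar α β hR hβ, fun x hx => Pfun_le_Pfun_of_Bfun_le ?_
    (Bfun_xstar_le α β hR hβ hx)⟩
  rw [Bfun_eq_sum_exp_logTerm α β (feasAlloc_xstar α β hR hβ).1]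
  positivity

theorem stmt_10 {N L C : Type*} [Fintype N] [Fintype L] [Fintype C]
    [Nonempty N] [Nonempty (L ⊕ C)]
    (R : ℝ) (hR : 0 < R) (α : N → ℝ) (hα : ∀ i, 0 ≤ α i)
    (β : L ⊕ C → ℝ) (hβ : ∀ j, 0 < β j) :
    FeasAlloc R (xstar R α β) ∧
    ∀ x : (N → L → ℝ) × (C → ℝ), FeasAlloc R x →
      Pfun α β (xstar R α β) ≤ Pfun α β x :=
  stmt_10_general R hR α β hβ
end

section
/- Suppose N ≠ ∅ and C ∪ L ≠ ∅. Define x* by x*_j = (β_j / ∑_{m∈L∪C} β_m) · R for all j ∈ C, and x*_{ij} = (β_j / ∑_{m∈L∪C} β_m) · R · exp(α_i / (1 + ∑_{k∈L} β_k)) / (∑_{m∈N} exp(α_m / (1 + ∑_{k∈L} β_k))) for all i ∈ N and all j ∈ L. Fix i ∈ N and j ∈ L. Then the partial derivative of B at x* with respect to the coordinate x_{ij} exists and equals λ := −(∑_{m∈N} exp(α_m/(1 + ∑_{k∈L} β_k)))^{1 + ∑_{k∈L} β_k} · (∑_{k∈L∪C} β_k)^{1 + ∑_{k∈L∪C} β_k}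 / (R^{1 + ∑_{k∈L∪C} β_k} · ∏_{k∈L∪C} β_k^{β_k}). In particular, ∂B/∂x_{ij}(x*) = −β_j · exp(α_i) / (x*_{ij} · ∏_{k∈C} (x*_k)^{β_k} · ∏_{k∈L} (x*_{ik})^{β_k}) = λ. -/
open Real Finset

/-!
Only the `i`-th summand of `B` depends on `x_{ij}`, and it is `exp α_i` times a power
`x_{ij}^{-β_j}` times a constant, so `∂B/∂x_{ij} = -β_j · (that summand) / x_{ij}`.
Write `S = ∑_{L ∪ C} β`, `e_m = exp (α_m / (1 + ∑_L β))` and `E = ∑_m e_m`. At `x*` every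
coordinate is `β_k` times a common factor, `a = R / S` on central resources and `a · b` with
`b = e_i / E` on the local resources of location `i`. Hence the denominator factorises as
`β_j · ∏ β_k^{β_k} · a^{1+S} · b^{1+∑_L β}`, and `e_i^{1+∑_L β} = exp α_i` cancels the numerator.
-/

theorem hasDerivAt_prod_update_rpow {ι : Type*} [Fintype ι] [DecidableEq ι]
    (f b : ι → ℝ) (j : ι) (hf : 0 < f j) :
    HasDerivAt (fun t => ∏ k, Function.update f j t k ^ b k)
      (b j / f j * ∏ k, f k ^ b k) (f j) := by
  have hsplit : ∀ t, ∏ k, Function.update f j t k ^ b k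
      = t ^ b j * ∏ k ∈ univ \ {j}, f k ^ b k := by
    intro t
    have hk : ∀ k, Function.update f j t k ^ b k
        = Function.update (fun k => f k ^ b k) j (t ^ b j) k := by
      intro k
      rcases eq_or_ne k j with rfl | hk <;> simp [*]
    simp only [hk, prod_update_of_mem (mem_univ j)]
  have hprod : ∏ k, f k ^ b k = f j ^ b j * ∏ k ∈ univ \ {j}, f k ^ b k := by
    simpa using hsplit (f j)
  simp only [hsplit, hprod]
  refine ((hasDerivAt_rpow_const (p := b j) (Or.inl hf.ne')).mul_const _).congr_deriv ?_
  rw [rpow_sub_one hf.ne']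
  ring

theorem prod_mul_const_rpow_self {ι : Type*} (s : Finset ι) {b : ι → ℝ} (hb : ∀ k ∈ s, 0 ≤ b k)
    {c : ℝ} (hc : 0 < c) :
    ∏ k ∈ s, (b k * c) ^ b k = (∏ k ∈ s, b k ^ b k) * c ^ ∑ k ∈ s, b k := by
  rw [prod_congr rfl fun k hk => mul_rpow (hb k hk) hc.le, prod_mul_distrib, rpow_sum_of_pos hc]

section
variable {N L C : Type*} [Fintype N] [Fintype L] [Fintype C]

theorem hasDerivAt_Bfun_update [DecidableEq N] [DecidableEq L] (α : N → ℝ) (β : L ⊕ C → ℝ)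
    {x : (N → L → ℝ) × (C → ℝ)} (hx : PosAlloc x) (i : N) (j : L) :
    HasDerivAt (fun t => Bfun α β (Function.update x.1 i (Function.update (x.1 i) j t), x.2))
      (-(β (.inl j) * exp (α i)) /
        (x.1 i j * (∏ k, x.2 k ^ β (.inr k)) * ∏ k, x.1 i k ^ β (.inl k)))
      (x.1 i j) := by
  set PC := ∏ k, x.2 k ^ β (.inr k)
  set PL := ∏ k, x.1 i k ^ β (.inl k) with hPL_def
  have hPC : 0 < PC := prod_pos fun k _ => rpow_pos_of_pos (hx.2 k) _
  have hPL : 0 < PL := prod_pos fun k _ => rpow_pos_of_pos (hx.1 i k) _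
  have hterm : ∀ m, HasDerivAt
      (fun t => exp (α m) / ((∏ k, Function.update x.1 i
        (Function.update (x.1 i) j t) m k ^ β (.inl k)) * PC))
      (if m = i then -(β (.inl j) * exp (α i)) / (x.1 i j * PC * PL) else 0) (x.1 i j) := by
    intro m
    rcases eq_or_ne m i with rfl | hm
    · simp only [Function.update_self, if_true]
      have hD := (hasDerivAt_prod_update_rpow (x.1 m) (fun k => β (.inl k)) j
        (hx.1 m j)).mul_const PC
      refine ((hasDerivAt_const _ (exp (α m))).div hD
        (by simp only [Function.update_eq_self]; positivity)).congr_deriv ?_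
      simp only [Function.update_eq_self, ← hPL_def]
      field_simp
      ring
    · simp only [Function.update_of_ne hm, if_neg hm]
      exact hasDerivAt_const _ _
  simpa [Bfun] using HasDerivAt.fun_sum (u := univ) fun m _ => hterm m

theorem posAlloc_xstar [Nonempty N] {R : ℝ} (hR : 0 < R) (α : N → ℝ) {β : L ⊕ C → ℝ}
    (hβ : ∀ k, 0 < β k) : PosAlloc (xstar R α β) := by
  have hE : 0 < ∑ m : N, exp (α m / (1 + ∑ k : L, β (.inl k))) :=
    sum_pos (fun m _ => exp_pos _) univ_nonempty
  have hS : ∀ k, 0 < ∑ m : L ⊕ C, β m := fun k => sum_pos (fun m _ => hβ m) ⟨k, mem_univ k⟩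
  refine ⟨fun i k => ?_, fun k => ?_⟩
  · have := hS (.inl k); have := hβ (.inl k); simp only [xstar]; positivity
  · have := hS (.inr k); have := hβ (.inr k); simp only [xstar]; positivity

theorem neg_div_xstar_eq {R : ℝ} (hR : 0 < R) (α : N → ℝ) {β : L ⊕ C → ℝ}
    (hβ : ∀ k, 0 < β k) (i : N) (j : L) :
    -(β (.inl j) * exp (α i)) /
        ((xstar R α β).1 i j * (∏ k : C, (xstar R α β).2 k ^ β (.inr k)) *
          ∏ k : L, (xstar R α β).1 i k ^ β (.inl k))
      = -(((∑ m : N, exp (α m / (1 + ∑ k : L, β (.inl k)))) ^ (1 + ∑ k : L, β (.inl k)) *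
          (∑ k : L ⊕ C, β k) ^ (1 + ∑ k : L ⊕ C, β k)) /
        (R ^ (1 + ∑ k : L ⊕ C, β k) * ∏ k : L ⊕ C, β k ^ β k)) := by
  set BL := ∑ k : L, β (.inl k)
  set S := ∑ k : L ⊕ C, β k
  set E := ∑ m : N, exp (α m / (1 + BL))
  have hS : S = BL + ∑ k : C, β (.inr k) := Fintype.sum_sum_type _
  have hS_pos : 0 < S := sum_pos (fun m _ => hβ m) ⟨.inl j, mem_univ _⟩
  have hE_pos : 0 < E := sum_pos (fun m _ => exp_pos _) ⟨i, mem_univ _⟩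
  have hBL_pos : 0 < BL := sum_pos (fun k _ => hβ _) ⟨j, mem_univ _⟩
  set a := R / S
  set b := exp (α i / (1 + BL)) / E
  have ha : 0 < a := by positivity
  have hb : 0 < b := by positivity
  have hxL : ∀ k, (xstar R α β).1 i k = β (.inl k) * (a * b) := fun k => by
    simp only [xstar, a, b, E, S, BL]; ring
  have hxC : ∀ k, (xstar R α β).2 k = β (.inr k) * a := fun k => by
    simp only [xstar, a, S]; ring
  have hPL : ∏ k : L, (xstar R α β).1 i k ^ β (.inl k)
      = (∏ k : L, β (.inl k) ^ β (.inl k)) * (a * b) ^ BL := by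
    simp only [hxL]; exact prod_mul_const_rpow_self _ (fun k _ => (hβ _).le) (by positivity)
  have hPC : ∏ k : C, (xstar R α β).2 k ^ β (.inr k)
      = (∏ k : C, β (.inr k) ^ β (.inr k)) * a ^ ∑ k : C, β (.inr k) := by
    simp only [hxC]; exact prod_mul_const_rpow_self _ (fun k _ => (hβ _).le) ha
  have hden : (xstar R α β).1 i j * (∏ k : C, (xstar R α β).2 k ^ β (.inr k)) *
      ∏ k : L, (xstar R α β).1 i k ^ β (.inl k)
        = β (.inl j) * (∏ k, β k ^ β k) * (a ^ (1 + S) * b ^ (1 + BL)) := by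
    rw [hxL, hPC, hPL, Fintype.prod_sum_type, hS]
    simp only [rpow_add ha, rpow_add hb, mul_rpow ha.le hb.le, rpow_one]
    ring
  have ha_pow : a ^ (1 + S) = R ^ (1 + S) / S ^ (1 + S) := div_rpow hR.le hS_pos.le _
  have hb_pow : b ^ (1 + BL) = exp (α i) / E ^ (1 + BL) := by
    rw [div_rpow (exp_pos _).le hE_pos.le, ← exp_mul, div_mul_cancel₀ _ (by positivity)]
  rw [hden, ha_pow, hb_pow]
  have := hβ (.inl j)
  have : 0 < ∏ k, β k ^ β k := prod_pos fun k _ => rpow_pos_of_pos (hβ k) _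
  field_simp
end

theorem stmt_12_general {N L C : Type*} [Fintype N] [Fintype L] [Fintype C]
    [DecidableEq N] [DecidableEq L]
    (R : ℝ) (hR : 0 < R) (α : N → ℝ)
    (β : L ⊕ C → ℝ) (hβ : ∀ j, 0 < β j) (i : N) (j : L)
    (lam : ℝ)
    (hlam : lam = -(((∑ m : N, Real.exp (α m / (1 + ∑ k : L, β (Sum.inl k))))
            ^ (1 + ∑ k : L, β (Sum.inl k)) *
          (∑ k : L ⊕ C, β k) ^ (1 + ∑ k : L ⊕ C, β k)) /
        (R ^ (1 + ∑ k : L ⊕ C, β k) * ∏ k : L ⊕ C, β k ^ β k))) :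
    HasDerivAt
      (fun t : ℝ => Bfun α β
        (Function.update (xstar R α β).1 i
          (Function.update ((xstar R α β).1 i) j t), (xstar R α β).2))
      lam ((xstar R α β).1 i j) ∧
    -(β (Sum.inl j) * Real.exp (α i)) /
        ((xstar R α β).1 i j * (∏ k : C, (xstar R α β).2 k ^ β (Sum.inr k)) *
          ∏ k : L, (xstar R α β).1 i k ^ β (Sum.inl k)) = lam := by
  have : Nonempty N := ⟨i⟩
  have hval := hlam ▸ neg_div_xstar_eq hR α hβ i j
  exact ⟨hval ▸ hasDerivAt_Bfun_update α β (posAlloc_xstar hR α hβ) i j, hval⟩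

theorem stmt_12 {N L C : Type*} [Fintype N] [Fintype L] [Fintype C]
    [DecidableEq N] [DecidableEq L]
    [Nonempty N] [Nonempty (L ⊕ C)]
    (R : ℝ) (hR : 0 < R) (α : N → ℝ) (hα : ∀ i, 0 ≤ α i)
    (β : L ⊕ C → ℝ) (hβ : ∀ j, 0 < β j) (i : N) (j : L)
    (lam : ℝ)
    (hlam : lam = -(((∑ m : N, Real.exp (α m / (1 + ∑ k : L, β (Sum.inl k))))
            ^ (1 + ∑ k : L, β (Sum.inl k)) *
          (∑ k : L ⊕ C, β k) ^ (1 + ∑ k : L ⊕ C, β k)) /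
        (R ^ (1 + ∑ k : L ⊕ C, β k) * ∏ k : L ⊕ C, β k ^ β k))) :
    HasDerivAt
      (fun t : ℝ => Bfun α β
        (Function.update (xstar R α β).1 i
          (Function.update ((xstar R α β).1 i) j t), (xstar R α β).2))
      lam ((xstar R α β).1 i j) ∧
    -(β (Sum.inl j) * Real.exp (α i)) /
        ((xstar R α β).1 i j * (∏ k : C, (xstar R α β).2 k ^ β (Sum.inr k)) *
          ∏ k : L, (xstar R α β).1 i k ^ β (Sum.inl k)) = lam :=
  stmt_12_general R hR α β hβ i j lam hlam
end

section
/- Suppose N ≠ ∅ and C ∪ L ≠ ∅. Define x* by x*_j = (β_j / ∑_{m∈L∪C} β_m) · R for all j ∈ C, and x*_{ij} = (β_j / ∑_{m∈L∪C} β_m) · R · exp(α_i / (1 + ∑_{k∈L} β_k)) / (∑_{m∈N} exp(α_m / (1 + ∑_{k∈L} β_k))) for all i ∈ N and all j ∈ L. Fix j ∈ C. Then the partial derivative of B at x* with respect to the coordinate x_j exists and equals λ := −(∑_{m∈N} exp(α_m/(1 + ∑_{k∈L} β_k)))^{1 + ∑_{k∈L} β_k} · (∑_{k∈L∪C} β_k)^{1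 + ∑_{k∈L∪C} β_k} / (R^{1 + ∑_{k∈L∪C} β_k} · ∏_{k∈L∪C} β_k^{β_k}). -/
open Real Finset

/-!
Along a central coordinate `x_j`, `B` is `K · x_j ^ (-β_j)` with `K` independent of `x_j`, so wherever
`x_j > 0` its partial derivative is `-β_j B(x) / x_j`. At `x*`, with `s = ∑_L β`,
`S = ∑_{L ∪ C} β`, `w_i = exp (α_i / (1 + s))` and `T = ∑ w_i`, every entry is `β_k R / S`, the local
ones scaled by `w_i / T`; so the `i`-th denominator is `(w_i / T) ^ s · (R / S) ^ S · ∏ β_k ^ β_k`, and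
as `exp α_i = w_i ^ (1 + s)` the `i`-th summand of `B(x*)` is `w_i T ^ s / ((R / S) ^ S ∏ β_k ^ β_k)`.
Summing gives `B(x*) = T ^ (1 + s) S ^ S / (R ^ S ∏ β_k ^ β_k)`, and dividing by `x*_j = β_j R / S`
gives `λ`.
-/

theorem prod_mul_rpow_const {ι : Type*} (s : Finset ι) {f a : ι → ℝ} (hf : ∀ k ∈ s, 0 ≤ f k)
    (ha : ∀ k ∈ s, 0 ≤ a k) {c : ℝ} (hc : 0 ≤ c) :
    ∏ k ∈ s, (f k * c) ^ a k = (∏ k ∈ s, f k ^ a k) * c ^ ∑ k ∈ s, a k := by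
  rw [Real.rpow_sum_of_nonneg hc ha, ← prod_mul_distrib]
  exact prod_congr rfl fun k hk => Real.mul_rpow (hf k hk) hc

section

variable {N L C : Type*} [Fintype N] [Fintype L] [Fintype C]

theorem Bfun_update_inr [DecidableEq C] (α : N → ℝ) (β : L ⊕ C → ℝ)
    (x : (N → L → ℝ) × (C → ℝ)) (j : C) (t : ℝ) :
    Bfun α β (x.1, Function.update x.2 j t) =
      Bfun α β (x.1, Function.update x.2 j 1) / t ^ β (Sum.inr j) := by
  have hprod : ∀ u : ℝ, ∏ k : C, Function.update x.2 j u k ^ β (Sum.inr k) =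
      u ^ β (Sum.inr j) * ∏ k ∈ univ \ {j}, x.2 k ^ β (Sum.inr k) := fun u => by
    rw [← prod_update_of_mem (mem_univ j)]
    refine prod_congr rfl fun k _ => ?_
    rcases eq_or_ne k j with rfl | hk <;> simp [*]
  simp only [Bfun, hprod, one_rpow, one_mul, sum_div, div_div]
  exact sum_congr rfl fun i _ => by ring_nf

theorem hasDerivAt_Bfun_update_inr [DecidableEq C] (α : N → ℝ) (β : L ⊕ C → ℝ)
    (x : (N → L → ℝ) × (C → ℝ)) (j : C) (hx : 0 < x.2 j) :
    HasDerivAt (fun t : ℝ => Bfun α β (x.1, Function.update x.2 j t))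
      (-β (Sum.inr j) * Bfun α β x / x.2 j) (x.2 j) := by
  set K := Bfun α β (x.1, Function.update x.2 j 1)
  have hB : Bfun α β x = K / x.2 j ^ β (Sum.inr j) := by
    rw [← Bfun_update_inr, Function.update_eq_self]
  have hK : HasDerivAt (fun t : ℝ => K * t ^ (-β (Sum.inr j)))
      (K * (-β (Sum.inr j) * x.2 j ^ (-β (Sum.inr j) - 1))) (x.2 j) :=
    (Real.hasDerivAt_rpow_const (Or.inl hx.ne')).const_mul K
  have hfun : (fun t : ℝ => Bfun α β (x.1, Function.update x.2 j t)) =ᶠ[nhds (x.2 j)]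
      fun t => K * t ^ (-β (Sum.inr j)) := by
    filter_upwards [eventually_gt_nhds hx] with t ht
    rw [Bfun_update_inr, Real.rpow_neg ht.le, div_eq_mul_inv]
  refine (hK.congr_of_eventuallyEq hfun).congr_deriv ?_
  rw [hB, Real.rpow_sub_one hx.ne', Real.rpow_neg hx.le]
  ring

theorem Bfun_xstar {R : ℝ} (hR : 0 ≤ R) (α : N → ℝ) {β : L ⊕ C → ℝ} (hβ : ∀ j, 0 ≤ β j) :
    Bfun α β (xstar R α β) =
      (∑ m : N, Real.exp (α m / (1 + ∑ k : L, β (Sum.inl k)))) ^ (1 + ∑ k : L, β (Sum.inl k)) /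
        ((R / ∑ k, β k) ^ (∑ k, β k) * ∏ k, β k ^ β k) := by
  set s := ∑ k : L, β (Sum.inl k)
  set S := ∑ k, β k
  set T := ∑ m : N, Real.exp (α m / (1 + s))
  set D := (R / S) ^ S * ∏ k, β k ^ β k
  have hs : 1 + s ≠ 0 := (add_pos_of_pos_of_nonneg one_pos (sum_nonneg fun k _ => hβ _)).ne'
  have hRS : 0 ≤ R / S := div_nonneg hR (sum_nonneg fun k _ => hβ k)
  have hT : 0 ≤ T := sum_nonneg fun m _ => (Real.exp_pos _).le
  have hscale : ∀ k, β k / S * R = β k * (R / S) := fun k => by ring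
  have hc : ∀ k, 0 ≤ β k / S * R := fun k => hscale k ▸ mul_nonneg (hβ k) hRS
  have hD : ∏ k, (β k / S * R) ^ β k = D := by
    simp only [hscale, prod_mul_rpow_const univ (fun k _ => hβ k) (fun k _ => hβ k) hRS, D, S,
      mul_comm]
  have hsummand : ∀ i, Real.exp (α i) / ((∏ l : L, (xstar R α β).1 i l ^ β (Sum.inl l)) *
      ∏ k : C, (xstar R α β).2 k ^ β (Sum.inr k)) = Real.exp (α i / (1 + s)) * T ^ s / D := fun i => by
    set w := Real.exp (α i / (1 + s))
    have hw : 0 < w := Real.exp_pos _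
    have hexp : Real.exp (α i) = w ^ (1 + s) := by
      rw [← Real.exp_mul, div_mul_cancel₀ _ hs]
    have hden : (∏ l : L, (xstar R α β).1 i l ^ β (Sum.inl l)) *
        ∏ k : C, (xstar R α β).2 k ^ β (Sum.inr k) = (w / T) ^ s * D := by
      simp only [xstar]
      rw [prod_mul_rpow_const univ (fun l _ => hc _) (fun l _ => hβ _)
        (div_nonneg hw.le hT), ← hD, Fintype.prod_sum_type]
      ring
    rw [hexp, hden, Real.div_rpow hw.le hT, Real.rpow_one_add' hw.le hs]
    field_simp
  rw [Bfun, Fintype.sum_congr _ _ hsummand, ← sum_div, ← sum_mul, Real.rpow_one_add' hT hs]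

end

theorem stmt_13_general {N L C : Type*} [Fintype N] [Fintype L] [Fintype C] [DecidableEq C]
    (R : ℝ) (hR : 0 < R) (α : N → ℝ)
    (β : L ⊕ C → ℝ) (hβ : ∀ j, 0 < β j) (j : C)
    (lam : ℝ)
    (hlam : lam = -(((∑ m : N, Real.exp (α m / (1 + ∑ k : L, β (Sum.inl k))))
            ^ (1 + ∑ k : L, β (Sum.inl k)) *
          (∑ k : L ⊕ C, β k) ^ (1 + ∑ k : L ⊕ C, β k)) /
        (R ^ (1 + ∑ k : L ⊕ C, β k) * ∏ k : L ⊕ C, β k ^ β k))) :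
    HasDerivAt
      (fun t : ℝ => Bfun α β ((xstar R α β).1, Function.update (xstar R α β).2 j t))
      lam ((xstar R α β).2 j) := by
  set S := ∑ k, β k with hS_def
  have hS : 0 < S := sum_pos' (fun k _ => (hβ k).le) ⟨Sum.inr j, mem_univ _, hβ _⟩
  have hxj : (xstar R α β).2 j = β (Sum.inr j) / S * R := rfl
  have hbj := hβ (Sum.inr j)
  refine (hasDerivAt_Bfun_update_inr α β _ j (hxj ▸ by positivity)).congr_deriv ?_
  rw [Bfun_xstar hR.le α fun k => (hβ k).le, ← hS_def, hlam, hxj, Real.div_rpow hR.le hS.le,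
    Real.rpow_one_add' hS.le (by positivity), Real.rpow_one_add' hR.le (by positivity)]
  field_simp

theorem stmt_13 {N L C : Type*} [Fintype N] [Fintype L] [Fintype C] [DecidableEq C]
    [Nonempty N] [Nonempty (L ⊕ C)]
    (R : ℝ) (hR : 0 < R) (α : N → ℝ) (hα : ∀ i, 0 ≤ α i)
    (β : L ⊕ C → ℝ) (hβ : ∀ j, 0 < β j) (j : C)
    (lam : ℝ)
    (hlam : lam = -(((∑ m : N, Real.exp (α m / (1 + ∑ k : L, β (Sum.inl k))))
            ^ (1 + ∑ k : L, β (Sum.inl k)) *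
          (∑ k : L ⊕ C, β k) ^ (1 + ∑ k : L ⊕ C, β k)) /
        (R ^ (1 + ∑ k : L ⊕ C, β k) * ∏ k : L ⊕ C, β k ^ β k))) :
    HasDerivAt
      (fun t : ℝ => Bfun α β ((xstar R α β).1, Function.update (xstar R α β).2 j t))
      lam ((xstar R α β).2 j) :=
  stmt_13_general R hR α β hβ j lam hlam
end
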